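/- (Non-increasing number of starting positions.) If P̃ is a subpattern of P via a strictly increasing map σ with σ(1) = 1, then for every MSS Z the number of starting positions of P in Z is at most the number of starting positions of P̃ in Z: |StartPos(P, Z)| ≤ |StartPos(P̃, Z)|. -/
import Mathlib


/-- The two Allen-style temporal relations used: `b` = before, `c` = co-occurs. -/
inductive TRel : Type
  | b : TRel
  | c : TRel
deriving DecidableEq

/-- A state: a variable label together with an abstraction value. -/
structure TState (Ab Lab : Type*) where
  F : Lab
  V : Ab

/-- A state interval: a state together with start and end times `s ≤ e`. -/
structure StateInterval (Ab Lab : Type*) where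
  F : Lab
  V : Ab
  s : ℝ
  e : ℝ
  hse : s ≤ e

/-- A multivariate state sequence: a finite sequence of state intervals with
nondecreasing start times. -/
structure MSS (Ab Lab : Type*) where
  l : ℕ
  E : Fin l → StateInterval Ab Lab
  mono : ∀ i j : Fin l, i ≤ j → (E i).s ≤ (E j).s

/-- The temporal relation between two state intervals (the earlier one first):
`b` if the first ends strictly before the second starts, `c` otherwise. -/
noncomputable def irel {Ab Lab : Type*} (Ei Ej : StateInterval Ab Lab) : TRel :=
  if Ei.e < Ej.s then TRel.b else TRel.c

/-- A temporal pattern of size `k`: a sequence of `k` states together with a map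
assigning a temporal relation to each pair of indices (only `i < j` is relevant). -/
structure Pattern (Ab Lab : Type*) where
  k : ℕ
  S : Fin k → TState Ab Lab
  R : Fin k → Fin k → TRel

/-- `Z` contains `P`: there is a strictly increasing map matching the states of `P`
to state intervals of `Z` realizing the prescribed temporal relations. -/
def Contains {Ab Lab : Type*} (Z : MSS Ab Lab) (P : Pattern Ab Lab) : Prop :=
  ∃ π : Fin P.k → Fin Z.l, StrictMono π ∧
    (∀ i, (P.S i).F = (Z.E (π i)).F ∧ (P.S i).V = (Z.E (π i)).V) ∧
    (∀ i j : Fin P.k, i < j → irel (Z.E (π i)) (Z.E (π j)) = P.R i j)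

/-- `Q` is a subpattern of `P`: there is a strictly increasing index map preserving
states and the relations between pairs of indices. -/
def Subpattern {Ab Lab : Type*} (Q P : Pattern Ab Lab) : Prop :=
  ∃ σ : Fin Q.k → Fin P.k, StrictMono σ ∧
    (∀ i, Q.S i = P.S (σ i)) ∧
    (∀ i j : Fin Q.k, i < j → Q.R i j = P.R (σ i) (σ j))

/-- The set of starting positions of `P` in `Z`: positions `p` such that some strictly
increasing witness `π` of `P ∈ Z` has `π(1) = p`. -/
def StartPos {Ab Lab : Type*} (P : Pattern Ab Lab) (Z : MSS Ab Lab) : Set (Fin Z.l) :=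
  {p | ∃ (hk : 0 < P.k) (π : Fin P.k → Fin Z.l), StrictMono π ∧
    (∀ i, (P.S i).F = (Z.E (π i)).F ∧ (P.S i).V = (Z.E (π i)).V) ∧
    (∀ i j : Fin P.k, i < j → irel (Z.E (π i)) (Z.E (π j)) = P.R i j) ∧
    π ⟨0, hk⟩ = p}

/-- If P̃ is a subpattern of P via a strictly increasing map σ with σ(1) = 1, then for
every MSS Z the number of starting positions of P in Z is at most that of P̃. -/
theorem ncard_startPos_le {Ab Lab : Type*}
    (Ptilde P : Pattern Ab Lab) (Z : MSS Ab Lab) (hQ : 0 < Ptilde.k)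
    (σ : Fin Ptilde.k → Fin P.k) (hmono : StrictMono σ)
    (hS : ∀ i, Ptilde.S i = P.S (σ i))
    (hR : ∀ i j : Fin Ptilde.k, i < j → Ptilde.R i j = P.R (σ i) (σ j))
    (hfirst : (σ ⟨0, hQ⟩ : ℕ) = 0) :
    (StartPos P Z).ncard ≤ (StartPos Ptilde Z).ncard := by
  apply Set.ncard_le_ncard _ (Set.toFinite _)
  rintro p ⟨hk, π, hπmono, hπS, hπR, hπ0⟩
  refine ⟨hQ, π ∘ σ, hπmono.comp hmono, ?_, ?_, ?_⟩
  · intro i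
    rw [hS i]
    exact hπS (σ i)
  · intro i j hij
    rw [hR i j hij]
    exact hπR _ _ (hmono hij)
  · have : σ ⟨0, hQ⟩ = ⟨0, hk⟩ := Fin.ext hfirst
    simp [Function.comp, this, hπ0]
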